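/- For every integer n ≥ 1, ⌈n·log₂ n⌉ - n + 1 ≤ W(n) ≤ ⌈n·log₂ n - 0.913·n⌉, where W(n) = n·⌈log₂ n⌉ - 2^⌈log₂ n⌉ + 1. -/
import Mathlib

private lemma key_a (x : ℝ) (h1 : 1/2 ≤ x) (h2 : x ≤ 1) :
    x * Real.log x + Real.log 2 ≤ x * Real.log 2 := by
  have hx0 : (0:ℝ) < x := by linarith
  rcases le_total x (Real.log 2) with h | h
  · have h3 : Real.log (2*x) ≤ 2*x - 1 := Real.log_le_sub_one_of_pos (by linarith)
    have h4 : Real.log (2*x) = Real.log 2 + Real.log x :=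
      Real.log_mul (by norm_num) hx0.ne'
    have h5 : Real.log x ≤ 2*x - 1 - Real.log 2 := by linarith
    nlinarith [mul_le_mul_of_nonneg_left h5 hx0.le,
      mul_nonneg (show (0:ℝ) ≤ 2*x - 1 by linarith) (show (0:ℝ) ≤ Real.log 2 - x by linarith)]
  · have h3 : Real.log x ≤ x - 1 := Real.log_le_sub_one_of_pos hx0
    nlinarith [mul_le_mul_of_nonneg_left h3 hx0.le,
      mul_nonneg (show (0:ℝ) ≤ 1 - x by linarith) (show (0:ℝ) ≤ x - Real.log 2 by linarith)]

private lemma key_b (x : ℝ) (h0 : 0 < x) (h2 : x ≤ 1) :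
    0.913 * (x * Real.log 2) < x * Real.log x + Real.log 2 := by
  have hU2 : Real.log 2 < 0.6931471808 := Real.log_two_lt_d9
  have hL2 : (0.6931471803:ℝ) < Real.log 2 := Real.log_two_gt_d9
  have ha_lb : (-0.366976 : ℝ) ≤ Real.log 0.6931 := by
    have h1 : (1:ℝ) ≤ 0.6931 * 1.0014335^(256:ℕ) := by norm_num
    have hlm : Real.log (0.6931 * 1.0014335^(256:ℕ))
        = Real.log 0.6931 + 256 * Real.log 1.0014335 := by
      rw [Real.log_mul (by norm_num) (by positivity), Real.log_pow]
      norm_num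
    have h3 : 0 ≤ Real.log ((0.6931:ℝ) * 1.0014335 ^ (256:ℕ)) := Real.log_nonneg h1
    have h4 : Real.log (1.0014335:ℝ) ≤ 0.0014335 := by
      have := Real.log_le_sub_one_of_pos (show (0:ℝ) < 1.0014335 by norm_num)
      linarith
    rw [hlm] at h3
    linarith
  have htan : x * Real.log 0.6931 - x * Real.log x ≤ 0.6931 - x := by
    have ht := Real.log_le_sub_one_of_pos (show (0:ℝ) < 0.6931 / x by positivity)
    rw [Real.log_div (by norm_num) h0.ne'] at ht
    have hxx : x * ((0.6931:ℝ) / x - 1) = 0.6931 - x := by field_simp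
    nlinarith [mul_le_mul_of_nonneg_left ht h0.le]
  have hcoef : 0 < Real.log 0.6931 + 1 - 0.913 * Real.log 2 := by linarith
  have halt : (0.6931:ℝ) < Real.log 2 := by linarith
  nlinarith [mul_pos h0 hcoef, htan, halt]

theorem W_ceil_bounds (n : ℕ) (hn : 1 ≤ n) :
    ⌈(n : ℝ) * Real.logb 2 n⌉ - n + 1
        ≤ (n : ℤ) * Nat.clog 2 n - 2 ^ Nat.clog 2 n + 1 ∧
    (n : ℤ) * Nat.clog 2 n - 2 ^ Nat.clog 2 n + 1
        ≤ ⌈(n : ℝ) * Real.logb 2 n - 0.913 * n⌉ := by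
  set k := Nat.clog 2 n with hk
  have h1 : n ≤ 2 ^ k := Nat.le_pow_clog one_lt_two n
  have h2 : 2 ^ k < 2 * n := by
    rcases eq_or_lt_of_le hn with h | h
    · simp [hk, ← h]
    · have hlt := Nat.pow_pred_clog_lt_self one_lt_two h
      have hkpos : 0 < k := Nat.clog_pos one_lt_two h
      have hlt' : 2 ^ (k - 1) < n := by
        simpa [Nat.pred_eq_sub_one, ← hk] using hlt
      have hpow : 2 ^ k = 2 ^ (k - 1) * 2 := by
        rw [← pow_succ]; congr 1; omega
      omega
  have hn0 : (0:ℝ) < n := by positivity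
  have hp0 : (0:ℝ) < 2 ^ k := by positivity
  have hl2 : (0:ℝ) < Real.log 2 := Real.log_pos (by norm_num)
  set x : ℝ := (n : ℝ) / 2 ^ k with hxdef
  have hx0 : 0 < x := by positivity
  have hx1 : x ≤ 1 := by
    rw [hxdef, div_le_one hp0]
    exact_mod_cast h1
  have hxh : 1/2 ≤ x := by
    rw [hxdef, le_div_iff₀ hp0]
    have : ((2:ℝ) ^ k) ≤ 2 * n := by exact_mod_cast h2.le
    linarith
  have hnx : (2:ℝ) ^ k * x = n := by
    rw [hxdef]; field_simp
  have hlx : Real.log x = Real.log n - k * Real.log 2 := by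
    rw [hxdef, Real.log_div hn0.ne' (by positivity), Real.log_pow]
  have hA : (n:ℝ) * Real.log x + 2 ^ k * Real.log 2 ≤ n * Real.log 2 := by
    have h := key_a x hxh hx1
    have h' := mul_le_mul_of_nonneg_left h hp0.le
    calc (n:ℝ) * Real.log x + 2 ^ k * Real.log 2
        = 2 ^ k * (x * Real.log x + Real.log 2) := by rw [← hnx]; ring
      _ ≤ 2 ^ k * (x * Real.log 2) := h'
      _ = n * Real.log 2 := by rw [← hnx]; ring
  have hB : 0.913 * ((n:ℝ) * Real.log 2) < n * Real.log x + 2 ^ k * Real.log 2 := by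
    have h := key_b x hx0 hx1
    have h' := mul_lt_mul_of_pos_left h hp0
    calc 0.913 * ((n:ℝ) * Real.log 2) = 2 ^ k * (0.913 * (x * Real.log 2)) := by
          rw [← hnx]; ring
      _ < 2 ^ k * (x * Real.log x + Real.log 2) := h'
      _ = n * Real.log x + 2 ^ k * Real.log 2 := by rw [← hnx]; ring
  rw [hlx] at hA hB
  constructor
  · have hceil : ⌈(n : ℝ) * Real.logb 2 n⌉ ≤ (n:ℤ) * k - 2 ^ k + n := by
      rw [Int.ceil_le]
      push_cast
      rw [Real.logb, show (n:ℝ) * (Real.log n / Real.log 2) = n * Real.log n / Real.log 2 from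
        (mul_div_assoc _ _ _).symm, div_le_iff₀ hl2]
      nlinarith [hA]
    linarith
  · rw [Int.le_ceil_iff]
    push_cast
    rw [Real.logb, show (n:ℝ) * (Real.log n / Real.log 2) = n * Real.log n / Real.log 2 from
      (mul_div_assoc _ _ _).symm]
    rw [show ((n:ℝ) * k - 2 ^ k + 1 - 1) = (n:ℝ) * k - 2 ^ k by ring,
      lt_sub_iff_add_lt, lt_div_iff₀ hl2]
    nlinarith [hB]
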